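/- arXiv:nlin/0411065 — 5 statements merged into one kernel-verified Lean document; each statement's English description precedes it below -/
import Mathlib

section
/- Let q : ℝ×ℝ → ℂ be smooth, a ∈ ℝ, Λ₀ ∈ ℝ, and let Ψ : ℝ×ℝ×ℝ → GL₂(ℂ) be smooth in (s,t,λ) such that for each λ ∈ ℝ, Ψ(·,·;λ) solves ∂Ψ/∂s = U(q,λ)Ψ, ∂Ψ/∂t = V(q,λ)Ψ. Define Ψ̃(s,t;λ̃) := exp((i/2)(as − a²t)σ₃)·Ψ(s − 2at, t; λ̃ + a/2), where σ₃ = diag(1,−1). Then the Sym–Pohlmeyer matrices reconstructed at corresponding spectral values coincide up to the Galilean change of variables: (Ψ̃⁻¹ ∂Ψ̃/∂λ̃)(s,t; Λ₀ − a/2) = (Ψ⁻¹ ∂Ψ/∂λ)(s − 2at, t; Λ₀) for all (s,t). -/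
noncomputable section
open Matrix Complex

abbrev M2 : Type := Matrix (Fin 2) (Fin 2) ℂ

/-- Partial derivative in the first (space) variable. -/
def dS {E : Type*} [NormedAddCommGroup E] [NormedSpace ℝ E]
    (f : ℝ × ℝ → E) (p : ℝ × ℝ) : E :=
  deriv (fun x => f (x, p.2)) p.1

/-- Partial derivative in the second (time) variable. -/
def dT {E : Type*} [NormedAddCommGroup E] [NormedSpace ℝ E]
    (f : ℝ × ℝ → E) (p : ℝ × ℝ) : E :=
  deriv (fun x => f (p.1, x)) p.2

/-- The AKNS matrix `U(q, λ)`. -/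
def Umat (q : ℝ × ℝ → ℂ) (lam : ℂ) (p : ℝ × ℝ) : M2 :=
  !![-I * lam, I * q p; I * (starRingEnd ℂ) (q p), I * lam]

/-- The AKNS matrix `V(q, λ)`. -/
def Vmat (q : ℝ × ℝ → ℂ) (lam : ℂ) (p : ℝ × ℝ) : M2 :=
  !![I * ((normSq (q p) : ℂ) - 2 * lam ^ 2), 2 * I * lam * q p - dS q p;
     2 * I * lam * (starRingEnd ℂ) (q p) + dS (fun x => (starRingEnd ℂ) (q x)) p,
     -(I * ((normSq (q p) : ℂ) - 2 * lam ^ 2))]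

/-- Entrywise partial derivative of a λ-family of matrix functions in `s`. -/
def mDs (Ψ : ℝ → ℝ → ℝ → M2) (s t lam : ℝ) : M2 :=
  Matrix.of fun i j => deriv (fun x => Ψ x t lam i j) s

/-- Entrywise partial derivative in `t`. -/
def mDt (Ψ : ℝ → ℝ → ℝ → M2) (s t lam : ℝ) : M2 :=
  Matrix.of fun i j => deriv (fun x => Ψ s x lam i j) t

/-- Entrywise partial derivative in the spectral parameter `λ`. -/
def mDlam (Ψ : ℝ → ℝ → ℝ → M2) (s t lam : ℝ) : M2 :=
  Matrix.of fun i j => deriv (fun x => Ψ s t x i j) lam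

/-- The diagonal matrix `exp((i/2)(as - a²t) σ₃)`. -/
def galMat (a : ℝ) (p : ℝ × ℝ) : M2 :=
  !![Complex.exp ((I / 2) * ((a : ℂ) * (p.1 : ℂ) - (a : ℂ) ^ 2 * (p.2 : ℂ))), 0;
     0, Complex.exp (-((I / 2) * ((a : ℂ) * (p.1 : ℂ) - (a : ℂ) ^ 2 * (p.2 : ℂ))))]

/-- The Galilean transform of a λ-family of fundamental solutions. -/
def galFam (a : ℝ) (Ψ : ℝ → ℝ → ℝ → M2) : ℝ → ℝ → ℝ → M2 :=
  fun s t lam => galMat a (s, t) * Ψ (s - 2 * a * t) t (lam + a / 2)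

theorem sym_curves_agree_under_galilean
    (q : ℝ × ℝ → ℂ) (hq : ContDiff ℝ (⊤ : ℕ∞) q) (a Λ₀ : ℝ) (Ψ : ℝ → ℝ → ℝ → M2)
    (hΨsmooth : ∀ i j : Fin 2,
      ContDiff ℝ (⊤ : ℕ∞) (fun p : ℝ × ℝ × ℝ => Ψ p.1 p.2.1 p.2.2 i j))
    (hGL : ∀ s t lam : ℝ, IsUnit (Ψ s t lam))
    (hΨs : ∀ lam s t : ℝ, mDs Ψ s t lam = Umat q (lam : ℂ) (s, t) * Ψ s t lam)
    (hΨt : ∀ lam s t : ℝ, mDt Ψ s t lam = Vmat q (lam : ℂ) (s, t) * Ψ s t lam) :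
    ∀ s t : ℝ,
      (galFam a Ψ s t (Λ₀ - a / 2))⁻¹ * mDlam (galFam a Ψ) s t (Λ₀ - a / 2) =
        (Ψ (s - 2 * a * t) t Λ₀)⁻¹ * mDlam Ψ (s - 2 * a * t) t Λ₀ := by
  intro s t
  set c : ℝ := s - 2 * a * t with hc
  set G : M2 := galMat a (s, t) with hG
  have hGdet : IsUnit (G.det) := by
    have : G.det = 1 := by
      simp [hG, galMat, Matrix.det_fin_two_of, ← Complex.exp_add]
    rw [this]; exact isUnit_one
  have hdiff : ∀ (i j : Fin 2),
      Differentiable ℝ (fun x : ℝ => Ψ c t (x + a / 2) i j) := by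
    intro i j
    have h1 : Differentiable ℝ (fun x : ℝ => ((c, t, x + a / 2) : ℝ × ℝ × ℝ)) :=
      (differentiable_const _).prodMk ((differentiable_const _).prodMk
        (differentiable_id.add_const _))
    exact ((hΨsmooth i j).differentiable (by simp)).comp h1
  have hkey : mDlam (galFam a Ψ) s t (Λ₀ - a / 2) = G * mDlam Ψ c t Λ₀ := by
    ext i j
    have : (fun x : ℝ => galFam a Ψ s t x i j)
        = fun x : ℝ => ∑ k, G i k * Ψ c t (x + a / 2) k j := by
      funext x
      simp [galFam, Matrix.mul_apply, hG, hc]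
    rw [mDlam, Matrix.of_apply, this, deriv_fun_sum]
    · rw [Matrix.mul_apply]
      refine Finset.sum_congr rfl fun k _ => ?_
      rw [deriv_const_mul _ (hdiff k j _)]
      congr 1
      have := deriv_comp_add_const (fun x : ℝ => Ψ c t x k j) (a / 2) (Λ₀ - a / 2)
      rw [this]
      norm_num [mDlam]
    · intro k _
      exact ((hdiff k j).const_mul _).differentiableAt
  have hgf : galFam a Ψ s t (Λ₀ - a / 2) = G * Ψ c t Λ₀ := by
    simp only [galFam, hG, hc]
    norm_num
  rw [hkey, hgf, Matrix.mul_inv_rev, Matrix.mul_assoc,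
    ← Matrix.mul_assoc G⁻¹, Matrix.nonsing_inv_mul G hGdet, Matrix.one_mul]
end
end

section
/- Let γ : ℝ → ℝ³ be a smooth unit-speed curve with a natural frame (T, N₁, N₂) with twist 0 whose natural curvatures are k₁ = Re q and k₂ = Im q for a smooth function q : ℝ → ℂ. If q(−s) = q(s) for all s ∈ ℝ, then γ is symmetric under reflection in the normal plane through γ(0): there exists a linear isometry R of ℝ³ with det R = −1, R(T(0)) = −T(0), R(N₁(0)) = N₁(0), R(N₂(0)) = N₂(0), such that γ(−s) = γ(0) + R(γ(s) − γ(0)) for all s ∈ ℝ. -/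
noncomputable section
open Matrix

section aux

lemma HasDerivAt.dotProd {f g : ℝ → Fin 3 → ℝ} {f' g' : Fin 3 → ℝ} {x : ℝ}
    (hf : HasDerivAt f f' x) (hg : HasDerivAt g g' x) :
    HasDerivAt (fun s => f s ⬝ᵥ g s) (f' ⬝ᵥ g x + f x ⬝ᵥ g') x := by
  have hf' := hasDerivAt_pi.1 hf
  have hg' := hasDerivAt_pi.1 hg
  have : HasDerivAt (fun s => ∑ i : Fin 3, f s i * g s i)
      (∑ i : Fin 3, (f' i * g x i + f x i * g' i)) x :=
    HasDerivAt.fun_sum (fun i _ => (hf' i).mul (hg' i))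
  simpa [dotProduct, Finset.sum_add_distrib] using this

lemma refl_mulVec (a v : Fin 3 → ℝ) :
    (1 - (2:ℝ) • vecMulVec a a).mulVec v = v - (2 * (a ⬝ᵥ v)) • a := by
  funext i
  fin_cases i <;>
    simp [Matrix.mulVec, Matrix.vecMulVec_apply, dotProduct, Matrix.sub_apply,
      Matrix.smul_apply, Matrix.one_apply, Fin.sum_univ_three, Fin.isValue] <;> ring

lemma hasDerivAt_comp_neg3 {F : ℝ → Fin 3 → ℝ} {D : Fin 3 → ℝ} {s : ℝ}
    (hF : HasDerivAt F D (-s)) : HasDerivAt (fun t => F (-t)) (-D) s := by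
  have := HasDerivAt.scomp (𝕜 := ℝ) (𝕜' := ℝ) s hF
    (hasDerivAt_neg s : HasDerivAt (fun x : ℝ => -x) (-1) s)
  simpa [Function.comp_def] using this

lemma hasDerivAt_reflApp (a : Fin 3 → ℝ) {F : ℝ → Fin 3 → ℝ} {D : Fin 3 → ℝ} {s : ℝ}
    (hF : HasDerivAt F D s) :
    HasDerivAt (fun t => (1 - (2:ℝ) • vecMulVec a a).mulVec (F t))
      ((1 - (2:ℝ) • vecMulVec a a).mulVec D) s := by
  simp only [refl_mulVec]
  have hdot : HasDerivAt (fun t => a ⬝ᵥ F t) (a ⬝ᵥ D) s := by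
    simpa using (hasDerivAt_const s a).dotProd hF
  exact hF.sub ((HasDerivAt.const_mul (2:ℝ) hdot).smul_const a)

end aux
lemma refl_orth (a : Fin 3 → ℝ) (h : a ⬝ᵥ a = 1) :
    (1 - (2:ℝ) • vecMulVec a a)ᵀ * (1 - (2:ℝ) • vecMulVec a a) = 1 := by
  have h' : a 0 * a 0 + a 1 * a 1 + a 2 * a 2 = 1 := by
    simpa [dotProduct, Fin.sum_univ_three] using h
  ext i j
  fin_cases i <;> fin_cases j <;>
    simp [Matrix.mul_apply, Matrix.transpose_apply, Matrix.sub_apply, Matrix.smul_apply,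
      Matrix.one_apply, Matrix.vecMulVec_apply, Fin.sum_univ_three, Fin.isValue]
  · linear_combination (4 * a 0 * a 0) * h'
  · linear_combination (4 * a 0 * a 1) * h'
  · linear_combination (4 * a 0 * a 2) * h'
  · linear_combination (4 * a 1 * a 0) * h'
  · linear_combination (4 * a 1 * a 1) * h'
  · linear_combination (4 * a 1 * a 2) * h'
  · linear_combination (4 * a 2 * a 0) * h'
  · linear_combination (4 * a 2 * a 1) * h'
  · linear_combination (4 * a 2 * a 2) * h'

lemma refl_det (a : Fin 3 → ℝ) (h : a ⬝ᵥ a = 1) :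
    (1 - (2:ℝ) • vecMulVec a a).det = -1 := by
  have h' : a 0 * a 0 + a 1 * a 1 + a 2 * a 2 = 1 := by
    simpa [dotProduct, Fin.sum_univ_three] using h
  simp [Matrix.det_fin_three, Matrix.sub_apply, Matrix.smul_apply, Matrix.one_apply,
    Matrix.vecMulVec_apply, Fin.isValue]
  linear_combination (-2 : ℝ) * h'

lemma dot_le_one (x y : Fin 3 → ℝ) (hx : x ⬝ᵥ x = 1) (hy : y ⬝ᵥ y = 1) : x ⬝ᵥ y ≤ 1 := by
  simp only [dotProduct, Fin.sum_univ_three] at *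
  nlinarith [sq_nonneg (x 0 - y 0), sq_nonneg (x 1 - y 1), sq_nonneg (x 2 - y 2)]

lemma eq_of_dot_eq_one (x y : Fin 3 → ℝ) (hx : x ⬝ᵥ x = 1) (hy : y ⬝ᵥ y = 1)
    (hxy : x ⬝ᵥ y = 1) : x = y := by
  simp only [dotProduct, Fin.sum_univ_three] at hx hy hxy
  have s3 : (x 0 - y 0) ^ 2 + (x 1 - y 1) ^ 2 + (x 2 - y 2) ^ 2 = 0 := by
    linear_combination hx + hy - 2 * hxy
  have h0 : x 0 = y 0 := by
    nlinarith [sq_nonneg (x 0 - y 0), sq_nonneg (x 1 - y 1), sq_nonneg (x 2 - y 2)]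
  have h1 : x 1 = y 1 := by
    nlinarith [sq_nonneg (x 0 - y 0), sq_nonneg (x 1 - y 1), sq_nonneg (x 2 - y 2)]
  have h2 : x 2 = y 2 := by
    nlinarith [sq_nonneg (x 0 - y 0), sq_nonneg (x 1 - y 1), sq_nonneg (x 2 - y 2)]
  funext i
  fin_cases i
  · exact h0
  · exact h1
  · exact h2

/-- A natural frame with twist `Λ₀` along a smooth unit-speed curve `γ : ℝ → ℝ³`,
with natural curvatures `k₁, k₂`. -/
structure IsNaturalFrame (γ T N₁ N₂ : ℝ → Fin 3 → ℝ) (Λ₀ : ℝ) (k₁ k₂ : ℝ → ℝ) : Prop where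
  smooth_γ : ContDiff ℝ (⊤ : ℕ∞) γ
  smooth_T : ContDiff ℝ (⊤ : ℕ∞) T
  smooth_N₁ : ContDiff ℝ (⊤ : ℕ∞) N₁
  smooth_N₂ : ContDiff ℝ (⊤ : ℕ∞) N₂
  smooth_k₁ : ContDiff ℝ (⊤ : ℕ∞) k₁
  smooth_k₂ : ContDiff ℝ (⊤ : ℕ∞) k₂
  tangent : ∀ s : ℝ, deriv γ s = T s
  unit_T : ∀ s : ℝ, T s ⬝ᵥ T s = 1
  unit_N₁ : ∀ s : ℝ, N₁ s ⬝ᵥ N₁ s = 1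
  unit_N₂ : ∀ s : ℝ, N₂ s ⬝ᵥ N₂ s = 1
  orth_TN₁ : ∀ s : ℝ, T s ⬝ᵥ N₁ s = 0
  orth_TN₂ : ∀ s : ℝ, T s ⬝ᵥ N₂ s = 0
  orth_N₁N₂ : ∀ s : ℝ, N₁ s ⬝ᵥ N₂ s = 0
  oriented : ∀ s : ℝ, crossProduct (T s) (N₁ s) = N₂ s
  frame_T : ∀ s : ℝ, deriv T s = k₁ s • N₁ s + k₂ s • N₂ s
  frame_N₁ : ∀ s : ℝ, deriv N₁ s = -(k₁ s) • T s + Λ₀ • N₂ s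
  frame_N₂ : ∀ s : ℝ, deriv N₂ s = -(k₂ s) • T s - Λ₀ • N₁ s

theorem reflection_symmetry_of_even_potential
    (γ T N₁ N₂ : ℝ → Fin 3 → ℝ) (q : ℝ → ℂ) (hq : ContDiff ℝ (⊤ : ℕ∞) q)
    (hframe : IsNaturalFrame γ T N₁ N₂ 0 (fun s => (q s).re) (fun s => (q s).im))
    (hsym : ∀ s : ℝ, q (-s) = q s) :
    ∃ R : Matrix (Fin 3) (Fin 3) ℝ,
      Rᵀ * R = 1 ∧ R.det = -1 ∧
      R.mulVec (T 0) = -(T 0) ∧ R.mulVec (N₁ 0) = N₁ 0 ∧ R.mulVec (N₂ 0) = N₂ 0 ∧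
      ∀ s : ℝ, γ (-s) = γ 0 + R.mulVec (γ s - γ 0) := by
  classical
  set a : Fin 3 → ℝ := T 0 with ha
  set Rf : Matrix (Fin 3) (Fin 3) ℝ := 1 - (2:ℝ) • vecMulVec a a with hRfdef
  have haa : a ⬝ᵥ a = 1 := hframe.unit_T 0
  have hRv : ∀ v, Rf.mulVec v = v - (2 * (a ⬝ᵥ v)) • a := fun v => refl_mulVec a v
  -- derivative facts for the frame
  have hdT : ∀ s, HasDerivAt T ((q s).re • N₁ s + (q s).im • N₂ s) s := by
    intro s
    have h := (hframe.smooth_T.differentiable (by simp) s).hasDerivAt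
    rwa [hframe.frame_T s] at h
  have hdN₁ : ∀ s, HasDerivAt N₁ (-((q s).re) • T s) s := by
    intro s
    have h := (hframe.smooth_N₁.differentiable (by simp) s).hasDerivAt
    rw [hframe.frame_N₁ s] at h
    simpa using h
  have hdN₂ : ∀ s, HasDerivAt N₂ (-((q s).im) • T s) s := by
    intro s
    have h := (hframe.smooth_N₂.differentiable (by simp) s).hasDerivAt
    rw [hframe.frame_N₂ s] at h
    simpa using h
  have hdγ : ∀ s, HasDerivAt γ (T s) s := by
    intro s
    have h := (hframe.smooth_γ.differentiable (by simp) s).hasDerivAt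
    rwa [hframe.tangent s] at h
  have hk1 : ∀ s : ℝ, (q (-s)).re = (q s).re := fun s => by rw [hsym s]
  have hk2 : ∀ s : ℝ, (q (-s)).im = (q s).im := fun s => by rw [hsym s]
  -- mirrored frame derivatives
  have hdTm : ∀ s, HasDerivAt (fun t => -(T (-t)))
      ((q s).re • N₁ (-s) + (q s).im • N₂ (-s)) s := by
    intro s
    have h2 : HasDerivAt (fun t => -(T (-t)))
        (-(-((q (-s)).re • N₁ (-s) + (q (-s)).im • N₂ (-s)))) s :=
      (hasDerivAt_comp_neg3 (hdT (-s))).neg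
    rw [neg_neg, hk1 s, hk2 s] at h2
    exact h2
  have hdN₁m : ∀ s, HasDerivAt (fun t => N₁ (-t)) ((q s).re • T (-s)) s := by
    intro s
    have := hasDerivAt_comp_neg3 (hdN₁ (-s))
    simpa [hk1 s] using this
  have hdN₂m : ∀ s, HasDerivAt (fun t => N₂ (-t)) ((q s).im • T (-s)) s := by
    intro s
    have := hasDerivAt_comp_neg3 (hdN₂ (-s))
    simpa [hk2 s] using this
  -- reflected frame derivatives
  have hdTr : ∀ s, HasDerivAt (fun t => Rf.mulVec (T t))
      (Rf.mulVec ((q s).re • N₁ s + (q s).im • N₂ s)) s :=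
    fun s => hasDerivAt_reflApp a (hdT s)
  have hdN₁r : ∀ s, HasDerivAt (fun t => Rf.mulVec (N₁ t))
      (Rf.mulVec (-((q s).re) • T s)) s :=
    fun s => hasDerivAt_reflApp a (hdN₁ s)
  have hdN₂r : ∀ s, HasDerivAt (fun t => Rf.mulVec (N₂ t))
      (Rf.mulVec (-((q s).im) • T s)) s :=
    fun s => hasDerivAt_reflApp a (hdN₂ s)
  -- the function measuring agreement of the two frames
  set φ : ℝ → ℝ := fun s => (-(T (-s))) ⬝ᵥ Rf.mulVec (T s) + N₁ (-s) ⬝ᵥ Rf.mulVec (N₁ s)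
      + N₂ (-s) ⬝ᵥ Rf.mulVec (N₂ s) with hφdef
  have hdφ : ∀ s, HasDerivAt φ 0 s := by
    intro s
    have h1 := (hdTm s).dotProd (hdTr s)
    have h2 := (hdN₁m s).dotProd (hdN₁r s)
    have h3 := (hdN₂m s).dotProd (hdN₂r s)
    have h : HasDerivAt φ _ s := (h1.add h2).add h3
    convert h using 1
    simp only [Matrix.mulVec_add, Matrix.mulVec_smul, add_dotProduct,
      dotProduct_add, smul_dotProduct, dotProduct_smul,
      neg_dotProduct, dotProduct_neg, smul_eq_mul]
    ring
  have hφconst : ∀ s, φ s = φ 0 :=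
    fun s => is_const_of_deriv_eq_zero (fun x => (hdφ x).differentiableAt)
      (fun x => (hdφ x).deriv) s 0
  -- action of the reflection at 0
  have hRT0 : Rf.mulVec a = -a := by
    rw [hRv a, haa, mul_one, two_smul]
    abel
  have hRN1 : Rf.mulVec (N₁ 0) = N₁ 0 := by
    rw [hRv, hframe.orth_TN₁ 0]
    simp
  have hRN2 : Rf.mulVec (N₂ 0) = N₂ 0 := by
    rw [hRv, hframe.orth_TN₂ 0]
    simp
  have hφ0 : φ 0 = 3 := by
    have : φ 0 = (-(T (-0))) ⬝ᵥ Rf.mulVec (T 0) + N₁ (-0) ⬝ᵥ Rf.mulVec (N₁ 0)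
        + N₂ (-0) ⬝ᵥ Rf.mulVec (N₂ 0) := rfl
    rw [this]
    rw [neg_zero, ← ha, hRT0, hRN1, hRN2]
    rw [neg_dotProduct, dotProduct_neg, neg_neg, haa,
      hframe.unit_N₁ 0, hframe.unit_N₂ 0]
    norm_num
  -- Rf preserves the dot product
  have hRdot : ∀ v w : Fin 3 → ℝ, Rf.mulVec v ⬝ᵥ Rf.mulVec w = v ⬝ᵥ w := by
    intro v w
    rw [hRv, hRv]
    simp only [sub_dotProduct, dotProduct_sub, smul_dotProduct,
      dotProduct_smul, smul_eq_mul]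
    rw [haa, dotProduct_comm v a]
    ring
  -- the frames agree
  have key : ∀ s, -(T (-s)) = Rf.mulVec (T s) := by
    intro s
    have humT : (-(T (-s))) ⬝ᵥ (-(T (-s))) = 1 := by
      rw [neg_dotProduct, dotProduct_neg, neg_neg]
      exact hframe.unit_T (-s)
    have hXT : Rf.mulVec (T s) ⬝ᵥ Rf.mulVec (T s) = 1 := by
      rw [hRdot]; exact hframe.unit_T s
    have hXN1 : Rf.mulVec (N₁ s) ⬝ᵥ Rf.mulVec (N₁ s) = 1 := by
      rw [hRdot]; exact hframe.unit_N₁ s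
    have hXN2 : Rf.mulVec (N₂ s) ⬝ᵥ Rf.mulVec (N₂ s) = 1 := by
      rw [hRdot]; exact hframe.unit_N₂ s
    have l1 := dot_le_one _ _ humT hXT
    have l2 := dot_le_one _ _ (hframe.unit_N₁ (-s)) hXN1
    have l3 := dot_le_one _ _ (hframe.unit_N₂ (-s)) hXN2
    have h0 : (-(T (-s))) ⬝ᵥ Rf.mulVec (T s) + N₁ (-s) ⬝ᵥ Rf.mulVec (N₁ s)
        + N₂ (-s) ⬝ᵥ Rf.mulVec (N₂ s) = 3 := by
      have := hφconst s
      rw [hφ0] at this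
      exact this
    have e1 : (-(T (-s))) ⬝ᵥ Rf.mulVec (T s) = 1 := by linarith
    exact eq_of_dot_eq_one _ _ humT hXT e1
  -- integrate
  have hψ : ∀ s, HasDerivAt (fun t => γ (-t) - (γ 0 + Rf.mulVec (γ t - γ 0))) 0 s := by
    intro s
    have h1 : HasDerivAt (fun t => γ (-t)) (-(T (-s))) s := hasDerivAt_comp_neg3 (hdγ (-s))
    have h2 : HasDerivAt (fun t => γ t - γ 0) (T s) s := (hdγ s).sub_const (γ 0)
    have h3 : HasDerivAt (fun t => Rf.mulVec (γ t - γ 0)) (Rf.mulVec (T s)) s :=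
      hasDerivAt_reflApp a h2
    have h4 : HasDerivAt (fun t => γ 0 + Rf.mulVec (γ t - γ 0)) (Rf.mulVec (T s)) s :=
      h3.const_add (γ 0)
    have h5 := h1.sub h4
    rw [key s, sub_self] at h5
    exact h5
  have final : ∀ s : ℝ, γ (-s) = γ 0 + Rf.mulVec (γ s - γ 0) := by
    intro s
    have hcoord : ∀ i : Fin 3,
        γ (-s) i - (γ 0 + Rf.mulVec (γ s - γ 0)) i
          = γ (-0) i - (γ 0 + Rf.mulVec (γ 0 - γ 0)) i := by
      intro i
      exact is_const_of_deriv_eq_zero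
        (fun x => ((hasDerivAt_pi.1 (hψ x)) i).differentiableAt)
        (fun x => by simpa using ((hasDerivAt_pi.1 (hψ x)) i).deriv) s 0
    have hz : γ (-s) - (γ 0 + Rf.mulVec (γ s - γ 0)) = 0 := by
      funext i
      simp only [Pi.sub_apply, Pi.zero_apply]
      rw [show γ (-s) i - (γ 0 + Rf.mulVec (γ s - γ 0)) i
            = γ (-0) i - (γ 0 + Rf.mulVec (γ 0 - γ 0)) i from hcoord i]
      simp [Matrix.mulVec_zero]
    have := sub_eq_zero.mp hz
    exact this
  exact ⟨Rf, refl_orth a haa, refl_det a haa, hRT0, hRN1, hRN2, final⟩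
end
end

section
/- Let γ : ℝ → ℝ³ be a smooth unit-speed curve with a natural frame (T, N₁, N₂) with twist 0 whose natural curvatures are k₁ = Re q and k₂ = Im q for a smooth function q : ℝ → ℂ. If conj(q(s)) = q(−s) for all s ∈ ℝ, then γ is symmetric under a 180-degree rotation about the normal line through γ(0) in direction N₁(0): there exists a linear isometry R of ℝ³ with det R = +1, R(T(0)) = −T(0), R(N₁(0)) = N₁(0), R(N₂(0)) = −N₂(0), such that γ(−s) = γ(0) + R(γ(s) − γ(0)) for all s ∈ ℝ. -/
noncomputable section
open Matrix

private lemma hasDerivAt_dotP {u v : ℝ → Fin 3 → ℝ} {u' v' : Fin 3 → ℝ} {s : ℝ}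
    (hu : HasDerivAt u u' s) (hv : HasDerivAt v v' s) :
    HasDerivAt (fun t => u t ⬝ᵥ v t) (u' ⬝ᵥ v s + u s ⬝ᵥ v') s := by
  have h : ∀ i ∈ Finset.univ, HasDerivAt (fun t => u t i * v t i) (u' i * v s i + u s i * v' i) s :=
    fun i _ => (hasDerivAt_pi.1 hu i).mul (hasDerivAt_pi.1 hv i)
  simpa [dotProduct, Finset.sum_add_distrib] using HasDerivAt.fun_sum h

private lemma hasDerivAt_mulVecf (R : Matrix (Fin 3) (Fin 3) ℝ) {u : ℝ → Fin 3 → ℝ}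
    {u' : Fin 3 → ℝ} {s : ℝ} (hu : HasDerivAt u u' s) :
    HasDerivAt (fun t => R.mulVec (u t)) (R.mulVec u') s := by
  rw [hasDerivAt_pi] at hu ⊢
  intro i
  have h : ∀ j ∈ Finset.univ, HasDerivAt (fun t => R i j * u t j) (R i j * u' j) s :=
    fun j _ => (hu j).const_mul _
  simpa [Matrix.mulVec, dotProduct] using HasDerivAt.fun_sum h

private lemma hasDerivAt_comp_negf {F : Type*} [NormedAddCommGroup F] [NormedSpace ℝ F]
    {g : ℝ → F} {g' : F} {s : ℝ} (hg : HasDerivAt g g' (-s)) :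
    HasDerivAt (fun t => g (-t)) (-g') s := by
  have h := HasDerivAt.scomp (𝕜 := ℝ) (𝕜' := ℝ) s hg (hasDerivAt_neg s)
  simpa [Function.comp_def] using h

theorem rotation_symmetry_of_conjugate_symmetric_potential
    (γ T N₁ N₂ : ℝ → Fin 3 → ℝ) (q : ℝ → ℂ) (hq : ContDiff ℝ (⊤ : ℕ∞) q)
    (hframe : IsNaturalFrame γ T N₁ N₂ 0 (fun s => (q s).re) (fun s => (q s).im))
    (hsym : ∀ s : ℝ, (starRingEnd ℂ) (q s) = q (-s)) :
    ∃ R : Matrix (Fin 3) (Fin 3) ℝ,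
      Rᵀ * R = 1 ∧ R.det = 1 ∧
      R.mulVec (T 0) = -(T 0) ∧ R.mulVec (N₁ 0) = N₁ 0 ∧ R.mulVec (N₂ 0) = -(N₂ 0) ∧
      ∀ s : ℝ, γ (-s) = γ 0 + R.mulVec (γ s - γ 0) := by
  obtain ⟨hsγ, hsT, hsN₁, hsN₂, -, -, htan, huT, huN₁, huN₂, hoTN₁, hoTN₂, hoN₁N₂, -,
    hfT, hfN₁, hfN₂⟩ := hframe
  have hk1 : ∀ s : ℝ, (q (-s)).re = (q s).re := fun s => by
    rw [← hsym s, Complex.conj_re]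
  have hk2 : ∀ s : ℝ, (q (-s)).im = -(q s).im := fun s => by
    rw [← hsym s, Complex.conj_im]
  -- derivatives of the frame
  have hT : ∀ s : ℝ, HasDerivAt T ((q s).re • N₁ s + (q s).im • N₂ s) s := fun s => by
    have h := (hsT.differentiable (by simp) s).hasDerivAt
    rwa [hfT s] at h
  have hN₁d : ∀ s : ℝ, HasDerivAt N₁ (-((q s).re • T s)) s := fun s => by
    have h := (hsN₁.differentiable (by simp) s).hasDerivAt
    rw [hfN₁ s] at h
    simpa using h
  have hN₂d : ∀ s : ℝ, HasDerivAt N₂ (-((q s).im • T s)) s := fun s => by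
    have h := (hsN₂.differentiable (by simp) s).hasDerivAt
    rw [hfN₂ s] at h
    simpa using h
  have hγd : ∀ s : ℝ, HasDerivAt γ (T s) s := fun s => by
    have h := (hsγ.differentiable (by simp) s).hasDerivAt
    rwa [htan s] at h
  -- the rotation matrix
  set M : Matrix (Fin 3) (Fin 3) ℝ := Matrix.of ![T 0, N₁ 0, N₂ 0] with hM
  set D : Matrix (Fin 3) (Fin 3) ℝ := Matrix.diagonal ![-1, 1, -1] with hD
  set R : Matrix (Fin 3) (Fin 3) ℝ := Mᵀ * D * M with hRdef
  have hc1 : N₁ 0 ⬝ᵥ T 0 = 0 := by rw [dotProduct_comm]; exact hoTN₁ 0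
  have hc2 : N₂ 0 ⬝ᵥ T 0 = 0 := by rw [dotProduct_comm]; exact hoTN₂ 0
  have hc3 : N₂ 0 ⬝ᵥ N₁ 0 = 0 := by rw [dotProduct_comm]; exact hoN₁N₂ 0
  have hMMt : M * Mᵀ = 1 := by
    ext i j
    have hent : (M * Mᵀ) i j = (![T 0, N₁ 0, N₂ 0] i) ⬝ᵥ (![T 0, N₁ 0, N₂ 0] j) := rfl
    rw [hent]
    fin_cases i <;> fin_cases j <;>
      simp [Matrix.one_apply, huT 0, huN₁ 0, huN₂ 0, hoTN₁ 0, hoTN₂ 0, hoN₁N₂ 0, hc1, hc2, hc3]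
  have hMtM : Mᵀ * M = 1 := mul_eq_one_comm.mp hMMt
  have hDD : D * D = 1 := by
    ext i j
    fin_cases i <;> fin_cases j <;>
      simp [hD, Matrix.mul_apply, Fin.sum_univ_three, Matrix.diagonal, Matrix.one_apply]
  have hRt : Rᵀ = R := by
    rw [hRdef, Matrix.transpose_mul, Matrix.transpose_mul, Matrix.transpose_transpose,
      hD, Matrix.diagonal_transpose, ← hD, Matrix.mul_assoc]
  have hRTR : Rᵀ * R = 1 := by
    rw [hRt, hRdef]
    have h1 : Mᵀ * D * M * (Mᵀ * D * M) = Mᵀ * D * (M * Mᵀ * (D * M)) := by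
      simp only [Matrix.mul_assoc]
    rw [h1, hMMt, Matrix.one_mul, Matrix.mul_assoc Mᵀ D (D * M), ← Matrix.mul_assoc D D M,
      hDD, Matrix.one_mul, hMtM]
  have hRR : R * R = 1 := by rw [show R * R = Rᵀ * R by rw [hRt]]; exact hRTR
  have hdet : R.det = 1 := by
    have hMdet : M.det * M.det = 1 := by
      have h := congrArg Matrix.det hMMt
      rwa [Matrix.det_mul, Matrix.det_transpose, Matrix.det_one] at h
    have hDdet : D.det = 1 := by
      rw [hD, Matrix.det_diagonal, Fin.prod_univ_three]
      norm_num
      show -(-1:ℝ) = 1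
      norm_num
    rw [hRdef, Matrix.det_mul, Matrix.det_mul, Matrix.det_transpose, hDdet, mul_one]
    exact hMdet
  -- mulVec formula
  have hMv : ∀ v : Fin 3 → ℝ, M.mulVec v = ![T 0 ⬝ᵥ v, N₁ 0 ⬝ᵥ v, N₂ 0 ⬝ᵥ v] := by
    intro v; funext i
    fin_cases i <;> simp [hM, Matrix.mulVec, dotProduct]
  have hDv : ∀ w : Fin 3 → ℝ, D.mulVec w = ![-w 0, w 1, -w 2] := by
    intro w; funext i
    fin_cases i <;> simp [hD, Matrix.mulVec_diagonal]
  have hMtv : ∀ w : Fin 3 → ℝ, Mᵀ.mulVec w = w 0 • T 0 + w 1 • N₁ 0 + w 2 • N₂ 0 := by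
    intro w; funext j
    simp [hM, Matrix.mulVec, dotProduct, Fin.sum_univ_three, Matrix.transpose_apply]
    ring
  have hRv : ∀ v : Fin 3 → ℝ,
      R.mulVec v = (N₁ 0 ⬝ᵥ v) • N₁ 0 - (T 0 ⬝ᵥ v) • T 0 - (N₂ 0 ⬝ᵥ v) • N₂ 0 := by
    intro v
    rw [hRdef, ← Matrix.mulVec_mulVec, ← Matrix.mulVec_mulVec, hMv, hDv, hMtv]
    simp only [Matrix.cons_val_zero, Matrix.cons_val_one, Matrix.head_cons, Matrix.cons_val_two,
      Matrix.tail_cons]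
    module
  have hRT0 : R.mulVec (T 0) = -(T 0) := by
    rw [hRv, hc1, hc2, huT 0]
    simp
  have hRN₁0 : R.mulVec (N₁ 0) = N₁ 0 := by
    rw [hRv, hoTN₁ 0, hc3, huN₁ 0]
    simp
  have hRN₂0 : R.mulVec (N₂ 0) = -(N₂ 0) := by
    rw [hRv, hoTN₂ 0, hoN₁N₂ 0, huN₂ 0]
    simp
  -- the reflected frame satisfies the same ODE
  have ha : ∀ s : ℝ, HasDerivAt (fun t => T t + R.mulVec (T (-t)))
      ((q s).re • (N₁ s - R.mulVec (N₁ (-s))) + (q s).im • (N₂ s + R.mulVec (N₂ (-s)))) s := by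
    intro s
    have h2 := hasDerivAt_comp_negf (hasDerivAt_mulVecf R (hT (-s)))
    have h4 := (hT s).add h2
    convert h4 using 1
    · rfl
    · rfl
    · rfl
    · rfl
    rw [hk1 s, hk2 s]
    simp only [Matrix.mulVec_add, Matrix.mulVec_smul, smul_sub, smul_add]
    module
  have hb : ∀ s : ℝ, HasDerivAt (fun t => N₁ t - R.mulVec (N₁ (-t)))
      (-((q s).re • (T s + R.mulVec (T (-s))))) s := by
    intro s
    have h2 := hasDerivAt_comp_negf (hasDerivAt_mulVecf R (hN₁d (-s)))
    have h4 := (hN₁d s).sub h2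
    convert h4 using 1
    · rfl
    · rfl
    · rfl
    · rfl
    rw [hk1 s]
    simp only [Matrix.mulVec_neg, Matrix.mulVec_smul, smul_add]
    module
  have hc : ∀ s : ℝ, HasDerivAt (fun t => N₂ t + R.mulVec (N₂ (-t)))
      (-((q s).im • (T s + R.mulVec (T (-s))))) s := by
    intro s
    have h2 := hasDerivAt_comp_negf (hasDerivAt_mulVecf R (hN₂d (-s)))
    have h4 := (hN₂d s).add h2
    convert h4 using 1
    · rfl
    · rfl
    · rfl
    · rfl
    rw [hk2 s]
    simp only [Matrix.mulVec_neg, Matrix.mulVec_smul, smul_add, neg_smul, neg_neg]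
    module
  -- the defect function is constant
  have hf : ∀ s : ℝ, HasDerivAt (fun t =>
      (T t + R.mulVec (T (-t))) ⬝ᵥ (T t + R.mulVec (T (-t))) +
      (N₁ t - R.mulVec (N₁ (-t))) ⬝ᵥ (N₁ t - R.mulVec (N₁ (-t))) +
      (N₂ t + R.mulVec (N₂ (-t))) ⬝ᵥ (N₂ t + R.mulVec (N₂ (-t)))) 0 s := by
    intro s
    have h := ((hasDerivAt_dotP (ha s) (ha s)).add (hasDerivAt_dotP (hb s) (hb s))).add
      (hasDerivAt_dotP (hc s) (hc s))
    convert h using 1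
    · rfl
    · rfl
    · rfl
    simp only [add_dotProduct, dotProduct_add, sub_dotProduct,
      dotProduct_sub, smul_dotProduct, dotProduct_smul,
      neg_dotProduct, dotProduct_neg, smul_eq_mul]
    ring
  have hconst := is_const_of_deriv_eq_zero (𝕜 := ℝ)
    (fun s => (hf s).differentiableAt) (fun s => (hf s).deriv)
  have nn : ∀ v : Fin 3 → ℝ, 0 ≤ v ⬝ᵥ v := fun v =>
    Finset.sum_nonneg fun i _ => mul_self_nonneg _
  have haz : ∀ s : ℝ, T s + R.mulVec (T (-s)) = 0 := by
    intro s
    have h0 := hconst s 0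
    rw [neg_zero, hRT0, hRN₁0, hRN₂0] at h0
    simp only [add_neg_cancel, sub_self, zero_dotProduct, add_zero] at h0
    have h1 : (T s + R.mulVec (T (-s))) ⬝ᵥ (T s + R.mulVec (T (-s))) = 0 := by
      have := nn (T s + R.mulVec (T (-s)))
      have := nn (N₁ s - R.mulVec (N₁ (-s)))
      have := nn (N₂ s + R.mulVec (N₂ (-s)))
      linarith
    exact dotProduct_self_eq_zero.mp h1
  have hRT : ∀ s : ℝ, R.mulVec (T s) = -(T (-s)) := by
    intro s
    have h := eq_neg_of_add_eq_zero_left (haz s)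
    rw [h, Matrix.mulVec_neg, Matrix.mulVec_mulVec, hRR, Matrix.one_mulVec]
  -- integrate
  have hg : ∀ s : ℝ, HasDerivAt (fun t => γ (-t) - (γ 0 + R.mulVec (γ t - γ 0))) 0 s := by
    intro s
    have h1 := hasDerivAt_comp_negf (hγd (-s))
    have h2 : HasDerivAt (fun t => γ t - γ 0) (T s) s := (hγd s).sub_const (γ 0)
    have h4 := (hasDerivAt_const s (γ 0)).add (hasDerivAt_mulVecf R h2)
    have h5 := h1.sub h4
    convert h5 using 1
    · rfl
    · rfl
    · rfl
    · rfl
    rw [hRT s]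
    abel
  have hgc := is_const_of_deriv_eq_zero (𝕜 := ℝ)
    (fun s => (hg s).differentiableAt) (fun s => (hg s).deriv)
  refine ⟨R, hRTR, hdet, hRT0, hRN₁0, hRN₂0, fun s => ?_⟩
  have h := hgc s 0
  simp only [neg_zero, sub_self, Matrix.mulVec_zero, add_zero] at h
  exact sub_eq_zero.mp h
end
end

section
/- Let γ : ℝ → ℝ³ be a smooth unit-speed curve with a natural frame (T, N₁, N₂) with twist 0 and natural curvatures k₁, k₂. Suppose there exist real constants (α, β) ≠ (0,0) such that α·k₁(s) + β·k₂(s) = 0 for all s ∈ ℝ (equivalently, the complex curvature q = k₁ + i k₂ is a constant unit-modulus multiple of its complex conjugate). Then γ is a planar curve: the vector v := αN₁(0) + βN₂(0) is nonzero and ⟨γ(s), v⟩ = ⟨γ(0), v⟩ for all s ∈ ℝ, so γ lies in a fixed affine plane. -/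
noncomputable section
open Matrix

theorem planar_of_linearly_dependent_curvatures
    (γ T N₁ N₂ : ℝ → Fin 3 → ℝ) (k₁ k₂ : ℝ → ℝ)
    (hframe : IsNaturalFrame γ T N₁ N₂ 0 k₁ k₂)
    (α β : ℝ) (hαβ : (α, β) ≠ (0, 0))
    (hlin : ∀ s : ℝ, α * k₁ s + β * k₂ s = 0) :
    α • N₁ 0 + β • N₂ 0 ≠ 0 ∧
    ∀ s : ℝ, γ s ⬝ᵥ (α • N₁ 0 + β • N₂ 0) = γ 0 ⬝ᵥ (α • N₁ 0 + β • N₂ 0) := by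
  have hdN₁ : Differentiable ℝ N₁ := hframe.smooth_N₁.differentiable (by simp)
  have hdN₂ : Differentiable ℝ N₂ := hframe.smooth_N₂.differentiable (by simp)
  have hdγ : Differentiable ℝ γ := hframe.smooth_γ.differentiable (by simp)
  -- V is constant
  set V : ℝ → Fin 3 → ℝ := fun s => α • N₁ s + β • N₂ s with hV
  have hVdiff : Differentiable ℝ V := (hdN₁.const_smul α).add (hdN₂.const_smul β)
  have hVderiv : ∀ s, deriv V s = 0 := by
    intro s
    have h1 : HasDerivAt N₁ (deriv N₁ s) s := (hdN₁ s).hasDerivAt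
    have h2 : HasDerivAt N₂ (deriv N₂ s) s := (hdN₂ s).hasDerivAt
    have h : HasDerivAt V (α • deriv N₁ s + β • deriv N₂ s) s :=
      (h1.const_smul α).add (h2.const_smul β)
    have heq : α • deriv N₁ s + β • deriv N₂ s = 0 := by
      rw [hframe.frame_N₁ s, hframe.frame_N₂ s]
      have := hlin s
      simp only [zero_smul, add_zero, sub_zero, smul_smul]
      rw [← add_smul]
      have : α * -k₁ s + β * -k₂ s = -(α * k₁ s + β * k₂ s) := by ring
      rw [this, hlin s, neg_zero, zero_smul]
    rw [heq] at h
    exact h.deriv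
  have hVconst : ∀ s, V s = V 0 := by
    intro s
    exact is_const_of_deriv_eq_zero hVdiff hVderiv s 0
  constructor
  · -- nonzero
    intro h
    have hdot : (α • N₁ 0 + β • N₂ 0) ⬝ᵥ (α • N₁ 0 + β • N₂ 0) = α ^ 2 + β ^ 2 := by
      simp [add_dotProduct, dotProduct_add, smul_dotProduct, dotProduct_smul,
        hframe.unit_N₁ 0, hframe.unit_N₂ 0, hframe.orth_N₁N₂ 0,
        dotProduct_comm (N₂ 0) (N₁ 0)]
      ring
    rw [h] at hdot
    simp only [zero_dotProduct] at hdot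
    have hα : α = 0 := by nlinarith [sq_nonneg α, sq_nonneg β]
    have hβ : β = 0 := by nlinarith [sq_nonneg α, sq_nonneg β]
    exact hαβ (by simp [hα, hβ])
  · intro s
    have key : ∀ s, deriv (fun t => γ t ⬝ᵥ (α • N₁ 0 + β • N₂ 0)) s = 0 := by
      intro s
      have hg : HasDerivAt γ (T s) s := by
        have := (hdγ s).hasDerivAt
        rwa [hframe.tangent s] at this
      have hcomp : ∀ i : Fin 3, HasDerivAt (fun t => γ t i) (T s i) s := by
        intro i
        exact (hasDerivAt_pi.mp hg) i
      have : HasDerivAt (fun t => γ t ⬝ᵥ (α • N₁ 0 + β • N₂ 0))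
          (T s ⬝ᵥ (α • N₁ 0 + β • N₂ 0)) s := by
        simp only [dotProduct]
        exact HasDerivAt.fun_sum fun i _ => (hcomp i).mul_const _
      have hzero : T s ⬝ᵥ (α • N₁ 0 + β • N₂ 0) = 0 := by
        have : (α • N₁ 0 + β • N₂ 0) = α • N₁ s + β • N₂ s := (hVconst s).symm
        rw [this]
        simp [dotProduct_add, dotProduct_smul, hframe.orth_TN₁ s, hframe.orth_TN₂ s]
      rw [hzero] at this
      exact this.deriv
    have hdg : Differentiable ℝ (fun t => γ t ⬝ᵥ (α • N₁ 0 + β • N₂ 0)) := by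
      intro t
      have hg : HasDerivAt γ (T t) t := by
        have := (hdγ t).hasDerivAt
        rwa [hframe.tangent t] at this
      have : HasDerivAt (fun u => γ u ⬝ᵥ (α • N₁ 0 + β • N₂ 0))
          (T t ⬝ᵥ (α • N₁ 0 + β • N₂ 0)) t := by
        simp only [dotProduct]
        exact HasDerivAt.fun_sum fun i _ => ((hasDerivAt_pi.mp hg) i).mul_const _
      exact this.differentiableAt
    exact is_const_of_deriv_eq_zero hdg key s 0
end
end

section
/- For every g ≥ 1, the matrix M satisfies M² = I, and the eigenspaces of M acting on ℚ^g (equivalently ℝ^g) satisfy: the (−1)-eigenspace ℳ₋ = ker(M + I) has dimension ⌈g/2⌉, and the (+1)-eigenspace ℳ₊ = ker(M − I) has dimension ⌈(g−1)/2⌉. -/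
noncomputable section
open Matrix

/-- The matrix `M` of the symmetric construction: `M_{j,1} = -1` for all `j`,
`M_{j, g+2-j} = 1` for `2 ≤ j ≤ g`, all other entries `0` (1-based indexing). -/
def symM (g : ℕ) : Matrix (Fin g) (Fin g) ℚ :=
  Matrix.of fun j k =>
    if (k : ℕ) = 0 then -1 else if (j : ℕ) + (k : ℕ) = g then 1 else 0

lemma symM_mulVec (g : ℕ) (hg : 1 ≤ g) (x : Fin g → ℚ) (j : Fin g) :
    (symM g).mulVec x j =
      -x ⟨0, hg⟩ + (if h : 1 ≤ (j : ℕ) then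
        x ⟨g - (j : ℕ), by have := j.isLt; omega⟩ else 0) := by
  have key : ∀ k : Fin g, symM g j k * x k =
      (if k = (⟨0, hg⟩ : Fin g) then -x k else 0)
      + (if h : 1 ≤ (j : ℕ) then
          (if k = (⟨g - (j : ℕ), by have := j.isLt; omega⟩ : Fin g) then x k else 0)
        else 0) := by
    intro k
    have hk := k.isLt
    have hj := j.isLt
    simp only [symM, Matrix.of_apply, Fin.ext_iff]
    split_ifs with h1 h2 h3 h4 h5 h6 h7 h8 <;> simp_all <;> omega
  simp only [Matrix.mulVec, dotProduct, key, Finset.sum_add_distrib]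
  congr 1
  · simp [Finset.sum_ite_eq']
  · by_cases h : 1 ≤ (j : ℕ) <;> simp [h, Finset.sum_ite_eq']

lemma symM_mul_self (g : ℕ) (hg : 1 ≤ g) : symM g * symM g = 1 := by
  have : Matrix.toLin' (symM g * symM g) = Matrix.toLin' (1 : Matrix (Fin g) (Fin g) ℚ) := by
    rw [Matrix.toLin'_mul, Matrix.toLin'_one]
    ext x j
    simp only [LinearMap.comp_apply, Matrix.toLin'_apply, LinearMap.id_apply]
    rw [symM_mulVec g hg, symM_mulVec g hg]
    have hj := j.isLt
    by_cases h : 1 ≤ (j : ℕ)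
    · rw [dif_pos h, symM_mulVec g hg]
      have h0 : ¬ (1 ≤ ((⟨0, hg⟩ : Fin g) : ℕ)) := by simp
      rw [dif_neg h0]
      have hgj : 1 ≤ ((⟨g - (j:ℕ), by omega⟩ : Fin g) : ℕ) := by simp; omega
      rw [dif_pos hgj]
      have : (⟨g - ((⟨g - (j:ℕ), by omega⟩ : Fin g) : ℕ), by simp; omega⟩ : Fin g) = j := by
        apply Fin.ext; simp; omega
      rw [this]; ring
    · have hj0 : j = ⟨0, hg⟩ := by apply Fin.ext; simpa using by omega
      subst hj0
      rw [dif_neg h]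
      have h0 : ¬ (1 ≤ ((⟨0, hg⟩ : Fin g) : ℕ)) := by simp
      rw [dif_neg h0]
      ring
  exact Matrix.toLin'.injective this

lemma mem_ker_sub_one (g : ℕ) (hg : 1 ≤ g) (x : Fin g → ℚ) :
    x ∈ LinearMap.ker (Matrix.toLin' (symM g - 1)) ↔
      (x ⟨0, hg⟩ = 0 ∧ ∀ j : Fin g, ∀ hj : 1 ≤ (j : ℕ),
        x ⟨g - (j : ℕ), by have := j.isLt; omega⟩ = x j) := by
  rw [LinearMap.mem_ker, Matrix.toLin'_apply, Matrix.sub_mulVec, Matrix.one_mulVec]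
  rw [sub_eq_zero, funext_iff]
  constructor
  · intro h
    have h0 := h ⟨0, hg⟩
    rw [symM_mulVec g hg] at h0
    rw [dif_neg (by simp)] at h0
    have hx0 : x ⟨0, hg⟩ = 0 := by simp at h0; linarith
    refine ⟨hx0, fun j hj => ?_⟩
    have hj' := h j
    rw [symM_mulVec g hg, dif_pos hj, hx0] at hj'
    linarith
  · rintro ⟨hx0, hx⟩ j
    rw [symM_mulVec g hg]
    by_cases hj : 1 ≤ (j : ℕ)
    · rw [dif_pos hj, hx0, hx j hj]; ring
    · rw [dif_neg hj]
      have : j = ⟨0, hg⟩ := by apply Fin.ext; simpa using by omega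
      rw [this, hx0]; ring

lemma finrank_ker_sub (g : ℕ) (hg : 1 ≤ g) :
    Module.finrank ℚ (LinearMap.ker (Matrix.toLin' (symM g - 1))) = g / 2 := by
  set K := LinearMap.ker (Matrix.toLin' (symM g - 1)) with hK
  have hidx : ∀ i : Fin (g / 2), (i : ℕ) + 1 < g := by
    intro i; have := i.isLt; omega
  let f : K →ₗ[ℚ] (Fin (g / 2) → ℚ) :=
    (LinearMap.funLeft ℚ ℚ (fun i : Fin (g / 2) => (⟨(i : ℕ) + 1, hidx i⟩ : Fin g))).comp
      K.subtype
  have hmin : ∀ j : Fin g, (j : ℕ) ≠ 0 → min (j : ℕ) (g - (j : ℕ)) - 1 < g / 2 := by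
    intro j hj; have := j.isLt; omega
  let inv : (Fin (g / 2) → ℚ) → K := fun y =>
    ⟨fun j => if h : (j : ℕ) = 0 then 0 else y ⟨min (j : ℕ) (g - (j : ℕ)) - 1, hmin j h⟩, by
      rw [hK, mem_ker_sub_one g hg]
      constructor
      · rw [dif_pos rfl]
      · intro j hj
        have h1 : (g - (j : ℕ)) ≠ 0 := by have := j.isLt; omega
        have h2 : (j : ℕ) ≠ 0 := by omega
        rw [dif_neg h1, dif_neg h2]
        congr 1
        apply Fin.ext
        have := j.isLt
        simp only [Fin.val_mk]
        omega⟩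
  have leftinv : ∀ x : K, inv (f x) = x := by
    rintro ⟨x, hx⟩
    rw [hK, mem_ker_sub_one g hg] at hx
    apply Subtype.ext
    funext j
    show (if h : (j : ℕ) = 0 then 0 else _) = x j
    by_cases hj : (j : ℕ) = 0
    · rw [dif_pos hj]
      have : j = ⟨0, hg⟩ := by apply Fin.ext; simpa using hj
      rw [this, hx.1]
    · rw [dif_neg hj]
      have hjlt := j.isLt
      show x ⟨min (j : ℕ) (g - (j : ℕ)) - 1 + 1, hidx ⟨_, hmin j hj⟩⟩ = x j
      rcases le_or_gt (j : ℕ) (g - (j : ℕ)) with hle | hlt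
      · have heq : (⟨min (j : ℕ) (g - (j : ℕ)) - 1 + 1, hidx ⟨_, hmin j hj⟩⟩ : Fin g) = j := by
          apply Fin.ext; simp only [Fin.val_mk]; omega
        exact congrArg x heq
      · have h2 := hx.2 j (by omega)
        have heq : (⟨min (j : ℕ) (g - (j : ℕ)) - 1 + 1, hidx ⟨_, hmin j hj⟩⟩ : Fin g)
            = (⟨g - (j : ℕ), by omega⟩ : Fin g) := by
          apply Fin.ext; simp only [Fin.val_mk]; omega
        exact (congrArg x heq).trans h2
  have rightinv : ∀ y, f (inv y) = y := by
    intro y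
    funext i
    simp only [f, inv, LinearMap.comp_apply, LinearMap.funLeft_apply,
      Submodule.coe_subtype]
    rw [dif_neg (by simp)]
    congr 1
    apply Fin.ext
    have := i.isLt
    simp only [Fin.val_mk]
    omega
  have hbij : Function.Bijective f :=
    Function.bijective_iff_has_inverse.mpr ⟨inv, leftinv, rightinv⟩
  have := (LinearEquiv.ofBijective f hbij).finrank_eq
  rw [this, Module.finrank_pi, Fintype.card_fin]

theorem symM_involution_and_eigenspace_dims (g : ℕ) (hg : 1 ≤ g) :
    symM g * symM g = 1 ∧
    Module.finrank ℚ (LinearMap.ker (Matrix.toLin' (symM g + 1))) = (g + 1) / 2 ∧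
    Module.finrank ℚ (LinearMap.ker (Matrix.toLin' (symM g - 1))) = g / 2 := by
  have hsq := symM_mul_self g hg
  have hsub := finrank_ker_sub g hg
  refine ⟨hsq, ?_, hsub⟩
  have hrange : LinearMap.range (Matrix.toLin' (symM g + 1))
      = LinearMap.ker (Matrix.toLin' (symM g - 1)) := by
    apply le_antisymm
    · rintro _ ⟨x, rfl⟩
      rw [LinearMap.mem_ker]
      have hmm : (symM g - 1) * (symM g + 1) = 0 := by
        have : (symM g - 1) * (symM g + 1) = symM g * symM g - 1 := by noncomm_ring
        rw [this, hsq, sub_self]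
      have hcomp : (Matrix.toLin' (symM g - 1)).comp (Matrix.toLin' (symM g + 1)) = 0 := by
        rw [← Matrix.toLin'_mul, hmm]
        simp
      exact congrFun (congrArg DFunLike.coe hcomp) x
    · intro x hx
      rw [LinearMap.mem_ker, map_sub, Matrix.toLin'_one, LinearMap.sub_apply,
        LinearMap.id_apply, sub_eq_zero] at hx
      refine ⟨(2 : ℚ)⁻¹ • x, ?_⟩
      rw [_root_.map_smul, map_add, Matrix.toLin'_one, LinearMap.add_apply,
        LinearMap.id_apply, hx, smul_add, ← add_smul]
      norm_num
  have hrn := LinearMap.finrank_range_add_finrank_ker (Matrix.toLin' (symM g + 1))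
  rw [hrange, hsub] at hrn
  have hpi : Module.finrank ℚ (Fin g → ℚ) = g := by
    rw [Module.finrank_pi, Fintype.card_fin]
  rw [hpi] at hrn
  omega
end
end
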